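/- The sequence n ↦ n^{1/d} · d_{n,p}(U([0,1]^d)) converges as n → ∞, and its limit equals inf_{n ≥ 1} n^{1/d} · d_{n,p}(U([0,1]^d)). -/

import Mathlib

open MeasureTheory ENNReal Filter Finset

noncomputable section

def Fppow {E : Type*} [NormedAddCommGroup E] [NormedSpace ℝ E]
    (p : ℝ) (Γ : Finset E) (ξ : E) : ℝ≥0∞ :=
  sInf { c | ∃ w : E → ℝ, (∀ x ∈ Γ, 0 ≤ w x) ∧ (∀ x ∈ Γ, w x ≤ 1) ∧
    (∑ x ∈ Γ, w x) = 1 ∧ (∑ x ∈ Γ, w x • x) = ξ ∧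
    c = ENNReal.ofReal (∑ x ∈ Γ, w x * ‖ξ - x‖ ^ p) }

def dnpPow {E : Type*} [NormedAddCommGroup E] [NormedSpace ℝ E]
    [MeasurableSpace E] (n : ℕ) (p : ℝ) (P : Measure E) : ℝ≥0∞ :=
  ⨅ (Γ : Finset E) (_ : Γ.card ≤ n), ∫⁻ ξ, Fppow p Γ ξ ∂P

def unif {d : ℕ} (s : Set (Fin d → ℝ)) : Measure (Fin d → ℝ) :=
  (volume s)⁻¹ • volume.restrict s

variable {E : Type*} [NormedAddCommGroup E] [NormedSpace ℝ E]

lemma Fppow_le {p : ℝ} {Γ : Finset E} {ξ : E} (w : E → ℝ)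
    (h1 : ∀ x ∈ Γ, 0 ≤ w x) (h2 : ∀ x ∈ Γ, w x ≤ 1)
    (h3 : (∑ x ∈ Γ, w x) = 1) (h4 : (∑ x ∈ Γ, w x • x) = ξ) :
    Fppow p Γ ξ ≤ ENNReal.ofReal (∑ x ∈ Γ, w x * ‖ξ - x‖ ^ p) :=
  sInf_le ⟨w, h1, h2, h3, h4, rfl⟩

lemma Fppow_anti {p : ℝ} {Γ Γ' : Finset E} (h : Γ ⊆ Γ') (ξ : E) :
    Fppow p Γ' ξ ≤ Fppow p Γ ξ := by
  apply le_sInf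
  rintro c ⟨w, h1, h2, h3, h4, rfl⟩
  classical
  set w' : E → ℝ := fun x => if x ∈ Γ then w x else 0 with hw'
  have hsum : ∀ (g : E → ℝ → ℝ), (∀ x, g x 0 = 0) →
      (∑ x ∈ Γ', g x (w' x)) = ∑ x ∈ Γ, g x (w x) := by
    intro g hg
    rw [← Finset.sum_subset h]
    · exact Finset.sum_congr rfl fun x hx => by simp [w', hx]
    · intro x _ hx; simp [w', hx, hg]
  have hsumv : ∀ (g : E → ℝ → E), (∀ x, g x 0 = 0) →
      (∑ x ∈ Γ', g x (w' x)) = ∑ x ∈ Γ, g x (w x) := by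
    intro g hg
    rw [← Finset.sum_subset h]
    · exact Finset.sum_congr rfl fun x hx => by simp [w', hx]
    · intro x _ hx; simp [w', hx, hg]
  have := Fppow_le (p := p) (Γ := Γ') (ξ := ξ) w'
    (fun x _ => by by_cases hx : x ∈ Γ <;> simp [w', hx, h1 x, le_refl])
    (fun x _ => by by_cases hx : x ∈ Γ <;> simp [w', hx, h2 x])
    (by rw [hsum (fun _ t => t) (fun _ => rfl)]; exact h3)
    (by rw [hsumv (fun x t => t • x) (fun x => zero_smul ℝ x)]; exact h4)
  refine this.trans (le_of_eq ?_)
  congr 1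
  exact hsum (fun x t => t * ‖ξ - x‖ ^ p) (fun x => zero_mul _)

lemma Fppow_affine_le [DecidableEq E] {p : ℝ} (hp : 0 ≤ p) {Γ : Finset E} {ξ : E} {b : E} {r : ℝ} (hr : 0 < r) :
    Fppow p (Γ.image (fun x => b + r • x)) (b + r • ξ) ≤
      ENNReal.ofReal (r ^ p) * Fppow p Γ ξ := by
  classical
  set f : E → E := fun x => b + r • x with hf
  have hinj : Function.Injective f := fun x y hxy => by
    have : r • x = r • y := by simpa [f] using hxy
    exact smul_right_injective E hr.ne' this
  rw [mul_comm, ← ENNReal.div_le_iff_le_mul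
    (Or.inl (ENNReal.ofReal_pos.mpr (Real.rpow_pos_of_pos hr p)).ne')
    (Or.inl ENNReal.ofReal_ne_top)]
  apply le_sInf
  rintro c ⟨w, h1, h2, h3, h4, rfl⟩
  apply ENNReal.div_le_of_le_mul'
  set w' : E → ℝ := fun y => w (r⁻¹ • (y - b)) with hw'
  have hwf : ∀ x : E, w' (f x) = w x := by
    intro x; simp [w', f, smul_smul, inv_mul_cancel₀ hr.ne']
  refine le_trans (Fppow_le w' ?_ ?_ ?_ ?_) ?_
  · intro y hy; obtain ⟨x, hx, rfl⟩ := Finset.mem_image.mp hy; rw [hwf]; exact h1 x hx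
  · intro y hy; obtain ⟨x, hx, rfl⟩ := Finset.mem_image.mp hy; rw [hwf]; exact h2 x hx
  · rw [Finset.sum_image (fun x _ y _ h => hinj h)]
    simpa [hwf] using h3
  · rw [Finset.sum_image (fun x _ y _ h => hinj h)]
    have : (∑ x ∈ Γ, w' (f x) • f x) = ∑ x ∈ Γ, (w x • b + r • (w x • x)) := by
      apply Finset.sum_congr rfl; intro x hx
      rw [hwf]; simp [f, smul_add, smul_smul, mul_comm]
    rw [this, Finset.sum_add_distrib, ← Finset.sum_smul, h3, one_smul, ← Finset.smul_sum, h4]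
  · rw [← ENNReal.ofReal_mul (Real.rpow_nonneg hr.le p)]
    apply le_of_eq
    congr 1
    rw [Finset.sum_image (fun x _ y _ h => hinj h), Finset.mul_sum]
    apply Finset.sum_congr rfl; intro x hx
    rw [hwf]
    have : (b + r • ξ) - f x = r • (ξ - x) := by simp [f, smul_sub]
    rw [this, norm_smul, Real.norm_eq_abs, abs_of_pos hr,
      Real.mul_rpow hr.le (norm_nonneg _)]
    ring



variable {d : ℕ}

lemma affEmb (b : Fin d → ℝ) {r : ℝ} (hr : r ≠ 0) :
    MeasurableEmbedding (fun x : Fin d → ℝ => b + r • x) := by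
  let e : (Fin d → ℝ) ≃ₜ (Fin d → ℝ) :=
    { toFun := fun x => b + r • x
      invFun := fun y => r⁻¹ • (y - b)
      left_inv := fun x => by simp [smul_smul, inv_mul_cancel₀ hr]
      right_inv := fun y => by simp [smul_smul, mul_inv_cancel₀ hr]
      continuous_toFun := by continuity
      continuous_invFun := by continuity }
  exact e.measurableEmbedding

lemma map_aff (b : Fin d → ℝ) {r : ℝ} (hr : 0 < r) :
    Measure.map (fun x : Fin d → ℝ => b + r • x) volume
      = (ENNReal.ofReal ((r ^ d)⁻¹)) • volume := by
  have h1 : (fun x : Fin d → ℝ => b + r • x) = (fun x => b + x) ∘ (fun x => r • x) := rfl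
  rw [h1, ← Measure.map_map (measurable_const_add b) (measurable_const_smul r)]
  have h2 : Measure.map (fun x : Fin d → ℝ => r • x) volume
      = ENNReal.ofReal ((r ^ d)⁻¹) • volume := by
    have := Measure.map_addHaar_smul (volume : Measure (Fin d → ℝ)) hr.ne'
    rw [this]
    congr 1
    rw [Module.finrank_fin_fun, abs_of_pos (by positivity)]
  rw [h2, Measure.map_smul, Measure.IsAddLeftInvariant.map_add_left_eq_self b]

lemma lintegral_image_cube (b : Fin d → ℝ) {r : ℝ} (hr : 0 < r)
    (g : (Fin d → ℝ) → ℝ≥0∞) :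
    ∫⁻ ξ in (fun x => b + r • x) '' Set.Icc (0 : Fin d → ℝ) 1, g ξ ∂volume
      = ENNReal.ofReal (r ^ d) *
        ∫⁻ η in Set.Icc (0 : Fin d → ℝ) 1, g (b + r • η) ∂volume := by
  set f : (Fin d → ℝ) → (Fin d → ℝ) := fun x => b + r • x with hf
  have hemb := affEmb b hr.ne'
  have key : (volume.restrict (Set.Icc (0:Fin d → ℝ) 1)).map f
      = (ENNReal.ofReal (r ^ d))⁻¹ • volume.restrict (f '' Set.Icc 0 1) := by
    calc (volume.restrict (Set.Icc (0:Fin d → ℝ) 1)).map f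
        = (volume.restrict (f ⁻¹' (f '' Set.Icc 0 1))).map f := by
          rw [Set.preimage_image_eq _ hemb.injective]
      _ = (volume.map f).restrict (f '' Set.Icc 0 1) := (hemb.restrict_map _ _).symm
      _ = _ := by
          rw [map_aff b hr, Measure.restrict_smul,
            ENNReal.ofReal_inv_of_pos (by positivity)]
  have h2 : ∫⁻ η in Set.Icc (0:Fin d → ℝ) 1, g (f η) ∂volume
      = (ENNReal.ofReal (r ^ d))⁻¹ * ∫⁻ ξ in f '' Set.Icc 0 1, g ξ ∂volume := by
    rw [← hemb.lintegral_map, key, lintegral_smul_measure, smul_eq_mul]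
  rw [h2, ← mul_assoc, ENNReal.mul_inv_cancel (by positivity) ENNReal.ofReal_ne_top, one_mul]

lemma dnpPow_scale (hd : 1 ≤ d) {p : ℝ} (hp : 1 ≤ p) (k m : ℕ) (hk : 1 ≤ k) :
    dnpPow (k ^ d * m) p (volume.restrict (Set.Icc (0 : Fin d → ℝ) 1))
      ≤ ENNReal.ofReal (((k : ℝ)⁻¹) ^ p) *
        dnpPow m p (volume.restrict (Set.Icc (0 : Fin d → ℝ) 1)) := by
  classical
  have hkR : (0 : ℝ) < (k : ℝ) := by exact_mod_cast hk
  set r : ℝ := (k : ℝ)⁻¹ with hrdef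
  have hr : 0 < r := by positivity
  set C : ℝ≥0∞ := ENNReal.ofReal (r ^ p) with hC
  have hC0 : C ≠ 0 := (ENNReal.ofReal_pos.mpr (Real.rpow_pos_of_pos hr p)).ne'
  have hCt : C ≠ ∞ := ENNReal.ofReal_ne_top
  set μ₀ := volume.restrict (Set.Icc (0 : Fin d → ℝ) 1) with hμ₀
  set bb : (Fin d → Fin k) → (Fin d → ℝ) := fun v i => r * (v i : ℝ) with hbb
  have key : ∀ Γ : Finset (Fin d → ℝ), Γ.card ≤ m →
      dnpPow (k ^ d * m) p μ₀ ≤ C * ∫⁻ ξ, Fppow p Γ ξ ∂μ₀ := by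
    intro Γ hΓ
    set Γ' : Finset (Fin d → ℝ) :=
      (univ : Finset (Fin d → Fin k)).biUnion
        (fun v => Γ.image (fun x => bb v + r • x)) with hΓ'
    have hcard : Γ'.card ≤ k ^ d * m := by
      refine le_trans Finset.card_biUnion_le ?_
      calc (∑ v : Fin d → Fin k, (Γ.image (fun x => bb v + r • x)).card)
          ≤ ∑ _v : Fin d → Fin k, m :=
            Finset.sum_le_sum fun v _ => le_trans Finset.card_image_le hΓ
        _ = k ^ d * m := by simp [Fintype.card_fun, mul_comm]
    have hcover : Set.Icc (0 : Fin d → ℝ) 1 ⊆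
        ⋃ v : Fin d → Fin k, (fun x => bb v + r • x) '' Set.Icc 0 1 := by
      intro ξ hξ
      have hξ0 : ∀ i, (0:ℝ) ≤ ξ i := fun i => hξ.1 i
      have hξ1 : ∀ i, ξ i ≤ 1 := fun i => hξ.2 i
      set v : Fin d → Fin k := fun i =>
        ⟨min (⌊(k : ℝ) * ξ i⌋₊) (k - 1), by
          have := min_le_right (⌊(k : ℝ) * ξ i⌋₊) (k - 1); omega⟩ with hv
      have hvle : ∀ i, ((v i : ℕ) : ℝ) ≤ (k:ℝ) * ξ i := by
        intro i
        calc ((v i : ℕ) : ℝ) ≤ (⌊(k : ℝ) * ξ i⌋₊ : ℝ) := by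
              exact_mod_cast Nat.cast_le.mpr (min_le_left _ _)
          _ ≤ (k:ℝ) * ξ i := Nat.floor_le (mul_nonneg hkR.le (hξ0 i))
      have hvge : ∀ i, (k:ℝ) * ξ i - 1 ≤ ((v i : ℕ) : ℝ) := by
        intro i
        by_cases hc : ⌊(k : ℝ) * ξ i⌋₊ ≤ k - 1
        · have : (v i : ℕ) = ⌊(k : ℝ) * ξ i⌋₊ := by simp [v, min_eq_left hc]
          rw [this]
          have := Nat.lt_floor_add_one ((k : ℝ) * ξ i)
          linarith
        · have : (v i : ℕ) = k - 1 := by simp [v, min_eq_right (le_of_not_ge hc)]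
          rw [this]
          have hcast : ((k - 1 : ℕ) : ℝ) = (k : ℝ) - 1 := by
            rw [Nat.cast_sub hk]; simp
          rw [hcast]
          have : (k:ℝ) * ξ i ≤ k := by
            calc (k:ℝ) * ξ i ≤ (k:ℝ) * 1 := by
                  exact mul_le_mul_of_nonneg_left (hξ1 i) hkR.le
              _ = k := mul_one _
          linarith
      refine Set.mem_iUnion.mpr ⟨v, ⟨fun i => (k:ℝ) * ξ i - ((v i : ℕ) : ℝ), ⟨?_, ?_⟩, ?_⟩⟩
      · intro i
        simp only [Pi.zero_apply]
        linarith [hvle i]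
      · intro i
        simp only [Pi.one_apply]
        linarith [hvge i]
      · funext i
        have hrk : r * (k:ℝ) = 1 := inv_mul_cancel₀ hkR.ne'
        simp only [Pi.add_apply, Pi.smul_apply, smul_eq_mul, bb]
        linear_combination (ξ i) * hrk
    have h1 : dnpPow (k ^ d * m) p μ₀ ≤ ∫⁻ ξ, Fppow p Γ' ξ ∂μ₀ := iInf₂_le Γ' hcard
    have h2 : (∫⁻ ξ, Fppow p Γ' ξ ∂μ₀) ≤
        ∑ v : Fin d → Fin k, ∫⁻ ξ in (fun x => bb v + r • x) '' Set.Icc 0 1,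
          Fppow p Γ' ξ ∂volume := by
      calc (∫⁻ ξ, Fppow p Γ' ξ ∂μ₀)
          ≤ ∫⁻ ξ in ⋃ v : Fin d → Fin k, (fun x => bb v + r • x) '' Set.Icc 0 1,
              Fppow p Γ' ξ ∂volume :=
            lintegral_mono' (Measure.restrict_mono hcover le_rfl) le_rfl
        _ ≤ ∑' v : Fin d → Fin k, ∫⁻ ξ in (fun x => bb v + r • x) '' Set.Icc 0 1,
              Fppow p Γ' ξ ∂volume := by
            rw [← lintegral_sum_measure]
            exact lintegral_mono' Measure.restrict_iUnion_le le_rfl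
        _ = _ := tsum_fintype _
    have h3 : ∀ v : Fin d → Fin k,
        (∫⁻ ξ in (fun x => bb v + r • x) '' Set.Icc 0 1, Fppow p Γ' ξ ∂volume)
          ≤ ENNReal.ofReal (r ^ d) * (C * ∫⁻ ξ, Fppow p Γ ξ ∂μ₀) := by
      intro v
      have hsub : Γ.image (fun x => bb v + r • x) ⊆ Γ' := by
        rw [hΓ']
        exact Finset.subset_biUnion_of_mem
          (fun v => Γ.image (fun x => bb v + r • x)) (mem_univ v)
      calc (∫⁻ ξ in (fun x => bb v + r • x) '' Set.Icc 0 1, Fppow p Γ' ξ ∂volume)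
          ≤ ∫⁻ ξ in (fun x => bb v + r • x) '' Set.Icc 0 1,
              Fppow p (Γ.image (fun x => bb v + r • x)) ξ ∂volume :=
            lintegral_mono fun ξ => Fppow_anti hsub ξ
        _ = ENNReal.ofReal (r ^ d) * ∫⁻ η in Set.Icc (0:Fin d → ℝ) 1,
              Fppow p (Γ.image (fun x => bb v + r • x)) (bb v + r • η) ∂volume :=
            lintegral_image_cube (bb v) hr _
        _ ≤ ENNReal.ofReal (r ^ d) * ∫⁻ η in Set.Icc (0:Fin d → ℝ) 1,
              C * Fppow p Γ η ∂volume := by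
            refine mul_le_mul_right (lintegral_mono fun η => ?_) _
            exact Fppow_affine_le (le_trans zero_le_one hp) hr
        _ = ENNReal.ofReal (r ^ d) * (C * ∫⁻ ξ, Fppow p Γ ξ ∂μ₀) := by
            rw [lintegral_const_mul' C _ hCt]
    have h4 : (∑ v : Fin d → Fin k, ∫⁻ ξ in (fun x => bb v + r • x) '' Set.Icc 0 1,
        Fppow p Γ' ξ ∂volume) ≤ C * ∫⁻ ξ, Fppow p Γ ξ ∂μ₀ := by
      calc _ ≤ ∑ _v : Fin d → Fin k,
            ENNReal.ofReal (r ^ d) * (C * ∫⁻ ξ, Fppow p Γ ξ ∂μ₀) :=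
            Finset.sum_le_sum fun v _ => h3 v
        _ = (k ^ d : ℕ) * (ENNReal.ofReal (r ^ d) * (C * ∫⁻ ξ, Fppow p Γ ξ ∂μ₀)) := by
            rw [Finset.sum_const, Finset.card_univ, Fintype.card_fun]
            simp [nsmul_eq_mul]
        _ = ((k ^ d : ℕ) * ENNReal.ofReal (r ^ d)) * (C * ∫⁻ ξ, Fppow p Γ ξ ∂μ₀) := by
            ring
        _ = C * ∫⁻ ξ, Fppow p Γ ξ ∂μ₀ := by
            rw [show ((k ^ d : ℕ) : ℝ≥0∞) * ENNReal.ofReal (r ^ d) = 1 from ?_, one_mul]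
            rw [hrdef, inv_pow, ENNReal.ofReal_inv_of_pos (by positivity)]
            rw [show ENNReal.ofReal ((k:ℝ) ^ d) = ((k ^ d : ℕ) : ℝ≥0∞) by
              rw [ENNReal.ofReal_pow hkR.le, ENNReal.ofReal_natCast, Nat.cast_pow]]
            exact ENNReal.mul_inv_cancel (by positivity) (by simp)
    exact h1.trans (h2.trans h4)
  have hdiv : dnpPow (k ^ d * m) p μ₀ / C ≤ dnpPow m p μ₀ :=
    le_iInf₂ fun Γ hΓ => ENNReal.div_le_of_le_mul' (key Γ hΓ)
  have := (ENNReal.div_le_iff_le_mul (Or.inl hC0) (Or.inl hCt)).mp hdiv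
  exact this.trans_eq (mul_comm _ _)


theorem fekete (d : ℕ) (hd : 1 ≤ d) (p : ℝ) (hp : 1 ≤ p) (D : ℕ → ℝ≥0∞)
    (D_mono : ∀ {n n' : ℕ}, n ≤ n' → D n' ≤ D n)
    (D_scale : ∀ k m : ℕ, 1 ≤ k → D (k ^ d * m) ≤ ENNReal.ofReal (((k : ℝ)⁻¹) ^ p) * D m) :
    Tendsto (fun n : ℕ => (n : ℝ≥0∞) ^ ((1 : ℝ) / d) * (D n) ^ ((1 : ℝ) / p)) atTop
      (nhds (⨅ n : ℕ, ((n + 1 : ℕ) : ℝ≥0∞) ^ ((1 : ℝ) / d) * (D (n + 1)) ^ ((1 : ℝ) / p))) := by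
  have hp0 : (0:ℝ) < p := lt_of_lt_of_le one_pos hp
  have hd0 : (0:ℝ) < d := by exact_mod_cast hd
  set a : ℕ → ℝ≥0∞ := fun n => (n : ℝ≥0∞) ^ ((1 : ℝ) / d) * (D n) ^ ((1 : ℝ) / p) with ha
  set L : ℝ≥0∞ := ⨅ n : ℕ, a (n + 1) with hL
  -- step (i)
  have hub : ∀ m K : ℕ, 1 ≤ m → 1 ≤ K → ∀ n, K ^ d * m ≤ n →
      a n ≤ (1 + (K : ℝ≥0∞)⁻¹) * a m := by
    intro m K hm hK n hn
    classical
    set P : ℕ → Prop := fun j => j ^ d * m ≤ n with hP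
    have hPK : P K := hn
    have hKn : K ≤ n := by
      calc K ≤ K ^ d := Nat.le_self_pow (by omega) K
        _ ≤ K ^ d * m := Nat.le_mul_of_pos_right _ (by omega)
        _ ≤ n := hn
    set kk : ℕ := Nat.findGreatest P n with hkk
    have hkK : K ≤ kk := Nat.le_findGreatest hKn hPK
    have hk1 : 1 ≤ kk := le_trans hK hkK
    have hkn : kk ^ d * m ≤ n := Nat.findGreatest_spec hKn hPK
    have hnub : n < (kk + 1) ^ d * m := by
      by_cases hc : kk + 1 ≤ n
      · have := Nat.findGreatest_is_greatest (lt_add_one kk) hc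
        omega
      · have h1 : n ≤ kk := by omega
        calc n < kk + 1 := by omega
          _ ≤ (kk + 1) ^ d := Nat.le_self_pow (by omega) _
          _ ≤ (kk + 1) ^ d * m := Nat.le_mul_of_pos_right _ (by omega)
    have hkk0 : ((kk : ℝ≥0∞)) ≠ 0 := Nat.cast_ne_zero.mpr (by omega)
    have hkkR : (0:ℝ) < (kk:ℝ) := by exact_mod_cast hk1
    -- D n bound
    have hDn : D n ≤ ((kk : ℝ≥0∞)⁻¹) ^ p * D m := by
      have h1 : D n ≤ D (kk ^ d * m) := D_mono hkn
      have h2 := D_scale kk m hk1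
      have h3 : ENNReal.ofReal (((kk : ℝ)⁻¹) ^ p) = ((kk : ℝ≥0∞)⁻¹) ^ p := by
        rw [← ENNReal.ofReal_rpow_of_pos (inv_pos.mpr hkkR),
          ENNReal.ofReal_inv_of_pos hkkR, ENNReal.ofReal_natCast]
      exact h1.trans (h3 ▸ h2)
    -- the chain
    have hcast : ((n : ℝ≥0∞)) ≤ ((kk : ℝ≥0∞) + 1) ^ (d : ℕ) * (m : ℝ≥0∞) := by
      have : ((n : ℝ≥0∞)) ≤ (((kk + 1) ^ d * m : ℕ) : ℝ≥0∞) := by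
        exact_mod_cast Nat.cast_le.mpr hnub.le
      refine this.trans (le_of_eq ?_)
      push_cast
      ring
    have hfirst : (n : ℝ≥0∞) ^ ((1:ℝ)/d) ≤ ((kk : ℝ≥0∞) + 1) * (m : ℝ≥0∞) ^ ((1:ℝ)/d) := by
      calc (n : ℝ≥0∞) ^ ((1:ℝ)/d)
          ≤ (((kk : ℝ≥0∞) + 1) ^ (d : ℕ) * (m : ℝ≥0∞)) ^ ((1:ℝ)/d) :=
            ENNReal.rpow_le_rpow hcast (by positivity)
        _ = (((kk : ℝ≥0∞) + 1) ^ (d : ℕ)) ^ ((1:ℝ)/d) * (m : ℝ≥0∞) ^ ((1:ℝ)/d) :=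
            ENNReal.mul_rpow_of_nonneg _ _ (by positivity)
        _ = ((kk : ℝ≥0∞) + 1) * (m : ℝ≥0∞) ^ ((1:ℝ)/d) := by
            rw [← ENNReal.rpow_natCast ((kk : ℝ≥0∞) + 1) d, ← ENNReal.rpow_mul,
              mul_one_div_cancel hd0.ne', ENNReal.rpow_one]
    have hsecond : (D n) ^ ((1:ℝ)/p) ≤ (kk : ℝ≥0∞)⁻¹ * (D m) ^ ((1:ℝ)/p) := by
      calc (D n) ^ ((1:ℝ)/p) ≤ (((kk : ℝ≥0∞)⁻¹) ^ p * D m) ^ ((1:ℝ)/p) :=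
            ENNReal.rpow_le_rpow hDn (by positivity)
        _ = (((kk : ℝ≥0∞)⁻¹) ^ p) ^ ((1:ℝ)/p) * (D m) ^ ((1:ℝ)/p) :=
            ENNReal.mul_rpow_of_nonneg _ _ (by positivity)
        _ = (kk : ℝ≥0∞)⁻¹ * (D m) ^ ((1:ℝ)/p) := by
            rw [← ENNReal.rpow_mul, mul_one_div_cancel hp0.ne', ENNReal.rpow_one]
    calc a n = (n : ℝ≥0∞) ^ ((1:ℝ)/d) * (D n) ^ ((1:ℝ)/p) := rfl
      _ ≤ (((kk : ℝ≥0∞) + 1) * (m : ℝ≥0∞) ^ ((1:ℝ)/d)) *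
          ((kk : ℝ≥0∞)⁻¹ * (D m) ^ ((1:ℝ)/p)) := mul_le_mul' hfirst hsecond
      _ = (((kk : ℝ≥0∞) + 1) * (kk : ℝ≥0∞)⁻¹) * a m := by ring
      _ = (1 + (kk : ℝ≥0∞)⁻¹) * a m := by
          rw [add_mul, ENNReal.mul_inv_cancel hkk0 (by simp), one_mul]
      _ ≤ (1 + (K : ℝ≥0∞)⁻¹) * a m := by
          refine mul_le_mul_left (add_le_add_right ?_ 1) _
          exact ENNReal.inv_le_inv.mpr (by exact_mod_cast hkK)
  -- step (ii)
  have hlimsup : ∀ m : ℕ, 1 ≤ m → limsup a atTop ≤ a m := by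
    intro m hm
    apply ENNReal.le_of_forall_pos_le_add
    intro ε hε hlt
    have ham : a m ≠ ∞ := hlt.ne
    have hls : ∀ K : ℕ, 1 ≤ K → limsup a atTop ≤ (1 + (K : ℝ≥0∞)⁻¹) * a m := by
      intro K hK
      refine limsup_le_of_le (by isBoundedDefault) ?_
      exact eventually_atTop.mpr ⟨K ^ d * m, fun n hn => hub m K hm hK n hn⟩
    by_cases h0 : a m = 0
    · refine (hls 1 le_rfl).trans ?_
      rw [h0, mul_zero]
      exact zero_le
    · have hdiv0 : ε / a m ≠ 0 := by
        simp [ENNReal.div_eq_zero_iff, ham, (by exact_mod_cast hε.ne' : (ε:ℝ≥0∞) ≠ 0)]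
      obtain ⟨K, hK⟩ := ENNReal.exists_inv_nat_lt hdiv0
      have hK1 : 1 ≤ K := by
        rcases Nat.eq_zero_or_pos K with h | h
        · subst h; simp at hK
        · exact h
      refine (hls K hK1).trans ?_
      rw [add_mul, one_mul]
      refine add_le_add_right ?_ _
      calc (K : ℝ≥0∞)⁻¹ * a m ≤ (ε / a m) * a m := mul_le_mul_left hK.le _
        _ = ε := ENNReal.div_mul_cancel h0 ham
  -- assemble
  have h1 : limsup a atTop ≤ L := le_iInf fun m => hlimsup (m + 1) (Nat.succ_le_succ (Nat.zero_le m))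
  have h2 : L ≤ liminf a atTop := by
    refine le_liminf_of_le (by isBoundedDefault) ?_
    refine eventually_atTop.mpr ⟨1, fun n hn => ?_⟩
    have : a n = a ((n - 1) + 1) := by congr 1; omega
    rw [this]
    exact iInf_le _ (n - 1)
  exact tendsto_of_le_liminf_of_limsup_le h2 h1


/-- the sequence `n ↦ n^{1/d} · d_{n,p}(U([0,1]^d))` converges, and
its limit equals its infimum over `n ≥ 1`. -/
theorem tendsto_rescaled_dnp_unifCube (d : ℕ) (hd : 1 ≤ d) (p : ℝ) (hp : 1 ≤ p) :
    Tendsto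
      (fun n : ℕ => (n : ℝ≥0∞) ^ ((1 : ℝ) / d) *
        (dnpPow n p (unif (Set.Icc (0 : Fin d → ℝ) 1))) ^ ((1 : ℝ) / p))
      atTop
      (nhds (⨅ n : ℕ, ((n + 1 : ℕ) : ℝ≥0∞) ^ ((1 : ℝ) / d) *
        (dnpPow (n + 1) p (unif (Set.Icc (0 : Fin d → ℝ) 1))) ^ ((1 : ℝ) / p))) := by
  have hvol : volume (Set.Icc (0 : Fin d → ℝ) 1) = 1 := by
    rw [Real.volume_Icc_pi]
    simp
  have hunif : unif (Set.Icc (0 : Fin d → ℝ) 1)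
      = volume.restrict (Set.Icc (0 : Fin d → ℝ) 1) := by
    rw [unif, hvol]
    simp
  simp only [hunif]
  exact fekete d hd p hp
    (fun n => dnpPow n p (volume.restrict (Set.Icc (0 : Fin d → ℝ) 1)))
    (fun {n n'} h => le_iInf₂ fun Γ hΓ => iInf₂_le Γ (hΓ.trans h))
    (fun k m hk => dnpPow_scale hd hp k m hk)

end
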